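/- arXiv:2107.09431 — 2 statements merged into one kernel-verified Lean document; each statement's English description precedes it below -/
import Mathlib

section
/- For T admitting an A-adjoint and α ∈ [0,1], ‖T‖_{A,α}² ≥ max{ (1/2)‖(α/4)(T^{♯A}T + TT^{♯A}) + (1−α)T^{♯A}T‖_A , (1/3)‖(α/2)(T^{♯A}T + TT^{♯A}) + (1−α)T^{♯A}T‖_A }. -/
/-!
Write the positive operator as `A = B† B`, so that `⟨x, y⟩_A = ⟪B x, B y⟫` and the `A`-adjoint
`S = T^♯` satisfies `⟪B (T x), B y⟫ = ⟪B x, B (S y)⟫`. With `N = ‖T‖_{A,α}`, the definition gives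
`|⟨T x, x⟩_A| ≤ N ‖x‖_A²` and `(1 - α) ‖T x‖_A² ≤ N² ‖x‖_A²`. The `A`-real and `A`-imaginary parts
of `T` are `A`-selfadjoint with `A`-numerical radius at most `N`, hence `A`-seminorm at most `N`,
and the parallelogram law turns this into `‖T x‖_A² + ‖S x‖_A² ≤ 4 N² ‖x‖_A²`. The operator
`R = c (S T + T S) + (1 - α) S T` is `A`-selfadjoint with
`⟨R x, x⟩_A = c (‖T x‖_A² + ‖S x‖_A²) + (1 - α) ‖T x‖_A² ≤ (4 c + 1) N² ‖x‖_A²`, so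
`‖R‖_A ≤ (4 c + 1) N²`; the choices `c = α/4` and `c = α/2` give `2 N²` and `3 N²` as `α ≤ 1`.
-/

open scoped ComplexOrder
open ContinuousLinearMap Filter Topology

variable {H : Type*} [NormedAddCommGroup H] [InnerProductSpace ℂ H] [CompleteSpace H]

/-- The A-semi-inner product `⟨x, y⟩_A = ⟨A x, y⟩` (Mathlib convention: conjugate
linear in the first variable). -/
noncomputable def aInner (A : H →L[ℂ] H) (x y : H) : ℂ := inner ℂ (A x) y

/-- The A-seminorm `‖x‖_A = sqrt ⟨x, x⟩_A`. -/
noncomputable def aNorm (A : H →L[ℂ] H) (x : H) : ℝ := Real.sqrt (aInner A x x).re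

/-- `T` is A-bounded. -/
def ABounded (A T : H →L[ℂ] H) : Prop := ∃ c > 0, ∀ x, aNorm A (T x) ≤ c * aNorm A x

/-- The A-operator seminorm. -/
noncomputable def opNormA (A T : H →L[ℂ] H) : ℝ :=
  sSup {r | ∃ x ∈ closure (Set.range A), aNorm A x = 1 ∧ r = aNorm A (T x)}

/-- The A-numerical radius. -/
noncomputable def wA (A T : H →L[ℂ] H) : ℝ :=
  sSup {r | ∃ x, aNorm A x = 1 ∧ r = ‖aInner A (T x) x‖}

/-- The A-Crawford number. -/
noncomputable def cA (A T : H →L[ℂ] H) : ℝ :=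
  sInf {r | ∃ x, aNorm A x = 1 ∧ r = ‖aInner A (T x) x‖}

/-- The `A_α`-seminorm `‖T‖_{A,α}`. -/
noncomputable def alphaNorm (A T : H →L[ℂ] H) (α : ℝ) : ℝ :=
  sSup {r | ∃ x, aNorm A x = 1 ∧
    r = Real.sqrt (α * ‖aInner A (T x) x‖ ^ 2 + (1 - α) * aNorm A (T x) ^ 2)}

/-- `S` is the A-adjoint `T^{♯_A}` of `T`: the solution of `A X = T* A` whose
range lies in the closure of the range of `A`. -/
def IsAAdjoint (A T S : H →L[ℂ] H) : Prop :=
  A ∘L S = (ContinuousLinearMap.adjoint T) ∘L A ∧ ∀ x, S x ∈ closure (Set.range A)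

open scoped InnerProductSpace
open ComplexConjugate

theorem pow_two_pow_mul_le_of_sq_le {f : ℕ → ℝ} (hf : ∀ m, 0 ≤ f m) (h0 : 0 < f 0)
    (h : ∀ m, f m ^ 2 ≤ f 0 * f (2 * m)) (n : ℕ) :
    f 1 ^ 2 ^ n * f 0 ≤ f 0 ^ 2 ^ n * f (2 ^ n) := by
  induction n with
  | zero => simp [mul_comm]
  | succ n ih =>
    have hsq : (f 1 ^ 2 ^ n * f 0) ^ 2 ≤ (f 0 ^ 2 ^ n * f (2 ^ n)) ^ 2 :=
      pow_le_pow_left₀ (by have := hf 1; positivity) ih 2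
    have hstep : (f 0 ^ 2 ^ n) ^ 2 * f (2 ^ n) ^ 2 ≤ (f 0 ^ 2 ^ n) ^ 2 * (f 0 * f (2 * 2 ^ n)) :=
      mul_le_mul_of_nonneg_left (h _) (by positivity)
    refine le_of_mul_le_mul_left ?_ h0
    rw [pow_succ', pow_mul', pow_mul']
    nlinarith

theorem le_of_forall_pow_two_pow_mul_le {a b c C : ℝ} (hb : 0 ≤ b) (hc : 0 < c)
    (h : ∀ n : ℕ, a ^ 2 ^ n * c ≤ b ^ 2 ^ n * C) : a ≤ b := by
  by_contra! hab
  rcases hb.eq_or_lt with rfl | hb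
  · have := h 0
    simp only [pow_zero, pow_one, zero_mul] at this
    nlinarith
  have hq : 1 < a / b := (one_lt_div hb).2 hab
  obtain ⟨n, hn⟩ := pow_unbounded_of_one_lt (C / c) hq
  have h2n : (a / b) ^ n ≤ (a / b) ^ 2 ^ n := pow_le_pow_right₀ hq.le Nat.lt_two_pow_self.le
  have : (a / b) ^ 2 ^ n ≤ C / c := by
    rw [div_pow, div_le_div_iff₀ (by positivity) hc]
    linarith [h n]
  linarith

section SemiInner

variable {E F : Type*} [NormedAddCommGroup E] [InnerProductSpace ℂ E]
  [NormedAddCommGroup F] [InnerProductSpace ℂ F] {B : E →L[ℂ] F}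

/-- For `A = B† B`, `⟪B x, B y⟫` is the semi-inner product `⟨x, y⟩_A`, and this says that `S` is
an `A`-adjoint of `T`. -/
def IsSemiAdjoint (B : E →L[ℂ] F) (T S : E →L[ℂ] E) : Prop :=
  ∀ x y, ⟪B (T x), B y⟫_ℂ = ⟪B x, B (S y)⟫_ℂ

/-- `‖T‖_{A,α} ≤ N`, written homogeneously so that it also covers vectors with `‖x‖_A = 0`. -/
def AlphaBoundedBy (B : E →L[ℂ] F) (T : E →L[ℂ] E) (α N : ℝ) : Prop :=
  ∀ y, α * ‖⟪B (T y), B y⟫_ℂ‖ ^ 2 + (1 - α) * ‖B (T y)‖ ^ 2 * ‖B y‖ ^ 2 ≤ N ^ 2 * ‖B y‖ ^ 4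

theorem AlphaBoundedBy.norm_inner_le {T : E →L[ℂ] E} {α N : ℝ} (hTN : AlphaBoundedBy B T α N)
    (hα1 : α ≤ 1) (hN : 0 ≤ N) (y : E) :
    ‖⟪B (T y), B y⟫_ℂ‖ ≤ N * ‖B y‖ ^ 2 := by
  have hcs : ‖⟪B (T y), B y⟫_ℂ‖ ^ 2 ≤ ‖B (T y)‖ ^ 2 * ‖B y‖ ^ 2 := by
    rw [← mul_pow]; gcongr; exact norm_inner_le_norm _ _
  refine (pow_le_pow_iff_left₀ (norm_nonneg _) (by positivity) two_ne_zero).1 ?_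
  nlinarith [hTN y]

namespace IsSemiAdjoint

variable {T S R : E →L[ℂ] E}

theorem symm (h : IsSemiAdjoint B T S) : IsSemiAdjoint B S T := fun x y => by
  rw [← inner_conj_symm (B x), h y x, inner_conj_symm]

theorem comp {T' S' : E →L[ℂ] E} (h : IsSemiAdjoint B T S) (h' : IsSemiAdjoint B T' S') :
    IsSemiAdjoint B (T ∘L T') (S' ∘L S) := fun x y => by
  rw [comp_apply, comp_apply, h, h']

theorem add {T' S' : E →L[ℂ] E} (h : IsSemiAdjoint B T S) (h' : IsSemiAdjoint B T' S') :
    IsSemiAdjoint B (T + T') (S + S') := fun x y => by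
  simp only [add_apply, map_add, inner_add_left, inner_add_right]
  rw [h, h']

theorem smul (h : IsSemiAdjoint B T S) (c : ℂ) : IsSemiAdjoint B (c • T) (conj c • S) :=
  fun x y => by
    simp only [smul_apply, map_smul, inner_smul_left, inner_smul_right]
    rw [h]

theorem smul_real (h : IsSemiAdjoint B T S) (r : ℝ) : IsSemiAdjoint B (r • T) (r • S) := by
  simpa only [← Complex.coe_smul, Complex.conj_ofReal] using h.smul r

theorem pow (hR : IsSemiAdjoint B R R) (n : ℕ) : IsSemiAdjoint B (R ^ n) (R ^ n) := by
  induction n with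
  | zero => exact fun x y => rfl
  | succ n ih =>
    rw [pow_succ]
    nth_rewrite 2 [pow_mul_comm']
    exact ih.comp hR

/-- Cauchy–Schwarz gives `‖B (Rᵐ z)‖² ≤ ‖B z‖ ‖B (R²ᵐ z)‖`; iterating along powers of two and
comparing with the crude bound `‖B (Rᵏ z)‖ ≤ ‖B‖ ‖R‖ᵏ ‖z‖` leaves only `‖R‖` in the limit. -/
theorem norm_apply_le (hR : IsSemiAdjoint B R R) (z : E) : ‖B (R z)‖ ≤ ‖R‖ * ‖B z‖ := by
  set f : ℕ → ℝ := fun m => ‖B ((R ^ m) z)‖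
  have hf0 : f 0 = ‖B z‖ := by simp [f]
  have hf1 : f 1 = ‖B (R z)‖ := by simp [f]
  have hsq : ∀ m, f m ^ 2 ≤ f 0 * f (2 * m) := fun m =>
    calc f m ^ 2 = RCLike.re ⟪B z, B ((R ^ (2 * m)) z)⟫_ℂ := by
          rw [two_mul, pow_add, mul_apply_eq_comp, ← hR.pow m, inner_self_eq_norm_sq_to_K]
          norm_cast
      _ ≤ f 0 * f (2 * m) := by rw [hf0]; exact re_inner_le_norm _ _
  rcases (norm_nonneg (B z)).eq_or_lt with hz | hz
  · have := hsq 1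
    rw [hf0, ← hz, zero_mul, hf1] at this
    rw [← hz, mul_zero]
    exact (pow_eq_zero_iff two_ne_zero).1 (le_antisymm this (sq_nonneg _)) |>.le
  refine le_of_forall_pow_two_pow_mul_le (C := ‖B‖ * ‖z‖) (by positivity) hz fun n => ?_
  calc ‖B (R z)‖ ^ 2 ^ n * ‖B z‖ ≤ ‖B z‖ ^ 2 ^ n * f (2 ^ n) := by
        have := pow_two_pow_mul_le_of_sq_le (f := f) (fun _ => norm_nonneg _) (hf0 ▸ hz) hsq n
        rwa [hf0, hf1] at this
    _ ≤ ‖B z‖ ^ 2 ^ n * (‖B‖ * (‖R‖ ^ 2 ^ n * ‖z‖)) := by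
        gcongr
        calc f (2 ^ n) ≤ ‖B‖ * ‖(R ^ 2 ^ n) z‖ := B.le_opNorm _
          _ ≤ ‖B‖ * (‖R ^ 2 ^ n‖ * ‖z‖) := by gcongr; exact (R ^ 2 ^ n).le_opNorm z
          _ ≤ ‖B‖ * (‖R‖ ^ 2 ^ n * ‖z‖) := by gcongr; exact norm_pow_le' R (by positivity)
    _ = (‖R‖ * ‖B z‖) ^ 2 ^ n * (‖B‖ * ‖z‖) := by ring

theorem sq_norm_apply_le (h : IsSemiAdjoint B T S) (x : E) :
    ‖B (T x)‖ ^ 2 ≤ ‖S ∘L T‖ * ‖B x‖ ^ 2 :=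
  calc ‖B (T x)‖ ^ 2 = RCLike.re ⟪B x, B (S (T x))⟫_ℂ := by
        rw [← h, inner_self_eq_norm_sq_to_K]; norm_cast
    _ ≤ ‖B x‖ * ‖B ((S ∘L T) x)‖ := re_inner_le_norm _ _
    _ ≤ ‖B x‖ * (‖S ∘L T‖ * ‖B x‖) := by gcongr; exact (h.symm.comp h).norm_apply_le x
    _ = ‖S ∘L T‖ * ‖B x‖ ^ 2 := by ring

theorem norm_apply_le_of_norm_inner_le (hR : IsSemiAdjoint B R R) {M : ℝ} (hM : 0 ≤ M)
    (h : ∀ y, ‖⟪B (R y), B y⟫_ℂ‖ ≤ M * ‖B y‖ ^ 2) (x : E) : ‖B (R x)‖ ≤ M * ‖B x‖ := by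
  set a := ‖B x‖
  set b := ‖B (R x)‖
  -- polarization at `x ± t • R x`: a nonnegative quadratic in `t`, so its discriminant is `≤ 0`
  have key : ∀ t : ℝ, 0 ≤ (M * b ^ 2) * (t * t) + (-2 * b ^ 2) * t + M * a ^ 2 := by
    intro t
    set y := (t : ℂ) • R x
    have hRxy : ⟪B (R x), B y⟫_ℂ = t * b ^ 2 := by
      rw [map_smul, inner_smul_right, inner_self_eq_norm_sq_to_K]; rfl
    have hRyx : ⟪B (R y), B x⟫_ℂ = t * b ^ 2 := by
      rw [hR, map_smul, inner_smul_left, inner_self_eq_norm_sq_to_K, Complex.conj_ofReal]; rfl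
    have hpol : ⟪B (R (x + y)), B (x + y)⟫_ℂ - ⟪B (R (x - y)), B (x - y)⟫_ℂ
        = ((4 * t * b ^ 2 : ℝ) : ℂ) := by
      simp only [map_add, map_sub, inner_add_left, inner_add_right, inner_sub_left,
        inner_sub_right]
      rw [hRxy, hRyx]
      push_cast
      ring
    have hy : ‖B y‖ = |t| * b := by rw [map_smul, norm_smul, Complex.norm_real, Real.norm_eq_abs]
    have hpar := parallelogram_law_with_norm ℂ (B x) (B y)
    have hineq : 4 * t * b ^ 2 ≤ 2 * M * (a ^ 2 + t ^ 2 * b ^ 2) := calc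
      4 * t * b ^ 2 ≤ ‖((4 * t * b ^ 2 : ℝ) : ℂ)‖ := by
          rw [Complex.norm_real, Real.norm_eq_abs]; exact le_abs_self _
      _ ≤ ‖⟪B (R (x + y)), B (x + y)⟫_ℂ‖ + ‖⟪B (R (x - y)), B (x - y)⟫_ℂ‖ := by
          rw [← hpol]; exact norm_sub_le _ _
      _ ≤ M * ‖B (x + y)‖ ^ 2 + M * ‖B (x - y)‖ ^ 2 := add_le_add (h _) (h _)
      _ = 2 * M * (a ^ 2 + t ^ 2 * b ^ 2) := by
          rw [map_add, map_sub, ← mul_add, hpar, hy, mul_pow, sq_abs]; ring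
    nlinarith
  have hd := discrim_le_zero key
  rw [discrim] at hd
  by_contra! hlt
  have hb : 0 < b := (mul_nonneg hM (norm_nonneg _)).trans_lt hlt
  have hsq : (M * a) ^ 2 * b ^ 2 < b ^ 2 * b ^ 2 :=
    mul_lt_mul_of_pos_right (pow_lt_pow_left₀ hlt (by positivity) two_ne_zero) (by positivity)
  nlinarith

theorem norm_sq_add_norm_sq_le (hT : IsSemiAdjoint B T S) {w : ℝ} (hw : 0 ≤ w)
    (h : ∀ y, ‖⟪B (T y), B y⟫_ℂ‖ ≤ w * ‖B y‖ ^ 2) (y : E) :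
    ‖B (T y)‖ ^ 2 + ‖B (S y)‖ ^ 2 ≤ 4 * w ^ 2 * ‖B y‖ ^ 2 := by
  -- the `A`-real and `A`-imaginary parts: `T = P - I • Q` and `S = P + I • Q`
  set P : E →L[ℂ] E := (2⁻¹ : ℂ) • (T + S)
  set Q : E →L[ℂ] E := (Complex.I / 2) • (T - S)
  have hS : ∀ u, ‖⟪B (S u), B u⟫_ℂ‖ ≤ w * ‖B u‖ ^ 2 := fun u => by
    rw [hT.symm, ← inner_conj_symm, RCLike.norm_conj]; exact h u
  have hP : IsSemiAdjoint B P P := fun u v => by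
    simp only [P, smul_apply, add_apply, map_smul, map_add, inner_smul_left, inner_smul_right,
      inner_add_left, inner_add_right]
    rw [hT, hT.symm]
    simp only [map_inv₀, map_ofNat]
    ring
  have hQ : IsSemiAdjoint B Q Q := fun u v => by
    simp only [Q, smul_apply, sub_apply, map_smul, map_sub, inner_smul_left, inner_smul_right,
      inner_sub_left, inner_sub_right]
    rw [hT, hT.symm]
    simp only [map_div₀, Complex.conj_I, map_ofNat]
    ring
  have hPy : ‖B (P y)‖ ≤ w * ‖B y‖ := hP.norm_apply_le_of_norm_inner_le hw (fun u => by
    simp only [P, smul_apply, add_apply, map_smul, map_add, inner_smul_left, inner_add_left]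
    rw [norm_mul, Complex.norm_conj, norm_inv, Complex.norm_ofNat]
    linarith [norm_add_le ⟪B (T u), B u⟫_ℂ ⟪B (S u), B u⟫_ℂ, h u, hS u]) y
  have hQy : ‖B (Q y)‖ ≤ w * ‖B y‖ := hQ.norm_apply_le_of_norm_inner_le hw (fun u => by
    simp only [Q, smul_apply, sub_apply, map_smul, map_sub, inner_smul_left, inner_sub_left]
    rw [norm_mul, Complex.norm_conj, norm_div, Complex.norm_I, Complex.norm_ofNat]
    linarith [norm_sub_le ⟪B (T u), B u⟫_ℂ ⟪B (S u), B u⟫_ℂ, h u, hS u]) y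
  have hI : Complex.I * (Complex.I / 2) = -2⁻¹ := by
    rw [← mul_div_assoc, Complex.I_mul_I]; norm_num
  have hTy : B (T y) = B (P y) - Complex.I • B (Q y) := by
    rw [← map_smul, ← map_sub]; congr 1
    simp only [P, Q, smul_apply, add_apply, sub_apply, smul_smul, hI]; module
  have hSy : B (S y) = B (P y) + Complex.I • B (Q y) := by
    rw [← map_smul, ← map_add]; congr 1
    simp only [P, Q, smul_apply, add_apply, sub_apply, smul_smul, hI]; module
  have hpar := parallelogram_law_with_norm ℂ (B (P y)) (Complex.I • B (Q y))
  rw [← hSy, ← hTy, norm_smul, Complex.norm_I, one_mul] at hpar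
  nlinarith [norm_nonneg (B (P y)), norm_nonneg (B (Q y))]

theorem norm_apply_combination_le (hT : IsSemiAdjoint B T S) {α N : ℝ}
    (hTN : AlphaBoundedBy B T α N) (hα0 : 0 ≤ α) (hα1 : α ≤ 1) (hN : 0 ≤ N) {c : ℝ}
    (hc : 0 ≤ c) (x : E) :
    ‖B ((c • (S ∘L T + T ∘L S) + (1 - α) • (S ∘L T)) x)‖ ≤ (4 * c + 1) * N ^ 2 * ‖B x‖ := by
  have hTy : ∀ y, (1 - α) * ‖B (T y)‖ ^ 2 ≤ N ^ 2 * ‖B y‖ ^ 2 := fun y => by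
    rcases (norm_nonneg (B y)).eq_or_lt with hy | hy
    · have := hT.sq_norm_apply_le y
      rw [← hy] at this ⊢
      nlinarith
    refine le_of_mul_le_mul_right ?_ (pow_pos hy 2)
    nlinarith [hTN y]
  have hsum := hT.norm_sq_add_norm_sq_le hN (hTN.norm_inner_le hα1 hN)
  have hR := (((hT.symm.comp hT).add (hT.comp hT.symm)).smul_real c).add
    ((hT.symm.comp hT).smul_real (1 - α))
  refine hR.norm_apply_le_of_norm_inner_le (by positivity) (fun y => ?_) x
  have hRy : ⟪B ((c • (S ∘L T + T ∘L S) + (1 - α) • (S ∘L T)) y), B y⟫_ℂ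
      = ((c * (‖B (T y)‖ ^ 2 + ‖B (S y)‖ ^ 2) + (1 - α) * ‖B (T y)‖ ^ 2 : ℝ) : ℂ) := by
    simp only [add_apply, smul_apply, comp_apply, map_add, ← Complex.coe_smul, map_smul,
      inner_add_left, inner_smul_left, Complex.conj_ofReal]
    rw [hT.symm (T y) y, hT (S y) y, inner_self_eq_norm_sq_to_K, inner_self_eq_norm_sq_to_K,
      RCLike.ofReal_eq_complex_ofReal]
    push_cast
    ring
  rw [hRy, Complex.norm_real, Real.norm_eq_abs, abs_of_nonneg
    (add_nonneg (by positivity) (mul_nonneg (sub_nonneg.2 hα1) (sq_nonneg _)))]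
  nlinarith [hTy y, hsum y, mul_le_mul_of_nonneg_left (hsum y) hc]

end IsSemiAdjoint

theorem opNormA_le {A R : E →L[ℂ] E} {M : ℝ} (hM : 0 ≤ M)
    (h : ∀ x, aNorm A (R x) ≤ M * aNorm A x) : opNormA A R ≤ M :=
  Real.sSup_le (by rintro r ⟨x, -, hx, rfl⟩; simpa [hx] using h x) hM

theorem alphaNorm_nonneg (A T : E →L[ℂ] E) (α : ℝ) : 0 ≤ alphaNorm A T α :=
  Real.sSup_nonneg fun _ ⟨_, _, hr⟩ => hr ▸ Real.sqrt_nonneg _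

end SemiInner

section SemiHilbert

variable {A B T S : H →L[ℂ] H}

theorem ContinuousLinearMap.IsPositive.exists_eq_adjoint_comp_self (hA : A.IsPositive) :
    ∃ B : H →L[ℂ] H, A = adjoint B ∘L B := by
  obtain ⟨B, hB⟩ := CStarAlgebra.nonneg_iff_eq_star_mul_self.1 ((nonneg_iff_isPositive A).2 hA)
  exact ⟨B, by rw [hB, star_eq_adjoint]; rfl⟩

theorem aInner_eq_inner (hAB : A = adjoint B ∘L B) (x y : H) : aInner A x y = ⟪B x, B y⟫_ℂ := by
  rw [aInner, hAB, comp_apply, adjoint_inner_left]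

theorem aNorm_eq_norm (hAB : A = adjoint B ∘L B) (x : H) : aNorm A x = ‖B x‖ := by
  rw [aNorm, aInner_eq_inner hAB, inner_self_eq_norm_sq_to_K, RCLike.ofReal_eq_complex_ofReal,
    ← Complex.ofReal_pow, Complex.ofReal_re, Real.sqrt_sq (norm_nonneg _)]

theorem IsAAdjoint.isSemiAdjoint (hAB : A = adjoint B ∘L B) (hT : IsAAdjoint A T S) :
    IsSemiAdjoint B T S := fun x y => by
  have hA : ∀ z, A z = adjoint B (B z) := fun z => by rw [hAB]; rfl
  have hS : A (S y) = adjoint T (A y) := DFunLike.congr_fun hT.1 y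
  rw [hA, hA] at hS
  calc ⟪B (T x), B y⟫_ℂ = ⟪x, adjoint T (adjoint B (B y))⟫_ℂ := by
        rw [adjoint_inner_right, adjoint_inner_right]
    _ = ⟪B x, B (S y)⟫_ℂ := by rw [← hS, adjoint_inner_right]

theorem IsSemiAdjoint.alphaBoundedBy_alphaNorm (hAB : A = adjoint B ∘L B)
    (hT : IsSemiAdjoint B T S) {α : ℝ} (hα0 : 0 ≤ α) : AlphaBoundedBy B T α (alphaNorm A T α) := by
  have hunit : ∀ u, ‖B u‖ = 1 →
      α * ‖⟪B (T u), B u⟫_ℂ‖ ^ 2 + (1 - α) * ‖B (T u)‖ ^ 2 ≤ alphaNorm A T α ^ 2 := by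
    intro u hu
    refine (Real.sqrt_le_left (alphaNorm_nonneg A T α)).1 (le_csSup ?_ ⟨u, ?_, ?_⟩)
    · refine ⟨√‖S ∘L T‖, ?_⟩
      rintro r ⟨v, hv, rfl⟩
      simp only [aInner_eq_inner hAB, aNorm_eq_norm hAB] at hv ⊢
      refine Real.sqrt_le_sqrt ?_
      have hcs : ‖⟪B (T v), B v⟫_ℂ‖ ≤ ‖B (T v)‖ := by
        simpa [hv] using norm_inner_le_norm (B (T v)) (B v)
      have hT2 := hT.sq_norm_apply_le v
      rw [hv, one_pow, mul_one] at hT2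
      nlinarith [mul_le_mul_of_nonneg_left (pow_le_pow_left₀ (norm_nonneg _) hcs 2) hα0]
    · rw [aNorm_eq_norm hAB, hu]
    · rw [aInner_eq_inner hAB, aNorm_eq_norm hAB]
  intro x
  rcases (norm_nonneg (B x)).eq_or_lt with hx | hx
  · simp [norm_eq_zero.1 hx.symm]
  set t := ‖B x‖
  have hu : ‖B ((t⁻¹ : ℂ) • x)‖ = 1 := by
    rw [map_smul, norm_smul, norm_inv, Complex.norm_real, Real.norm_of_nonneg hx.le,
      inv_mul_cancel₀ hx.ne']
  have h := hunit _ hu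
  simp only [map_smul, inner_smul_left, inner_smul_right, norm_mul, norm_smul, map_inv₀,
    Complex.conj_ofReal, norm_inv, Complex.norm_real, Real.norm_of_nonneg hx.le] at h
  field_simp at h
  nlinarith [h]

end SemiHilbert

theorem stmt16 (A T S : H →L[ℂ] H) (hA : A.IsPositive) (hT : IsAAdjoint A T S)
    (α : ℝ) (hα : α ∈ Set.Icc (0:ℝ) 1) :
    alphaNorm A T α ^ 2 ≥
      max ((1/2) * opNormA A ((α/4) • (S ∘L T + T ∘L S) + (1 - α) • (S ∘L T)))
          ((1/3) * opNormA A ((α/2) • (S ∘L T + T ∘L S) + (1 - α) • (S ∘L T))) := by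
  obtain ⟨hα0, hα1⟩ := hα
  obtain ⟨B, hAB⟩ := hA.exists_eq_adjoint_comp_self
  have hTB := hT.isSemiAdjoint hAB
  have hN := alphaNorm_nonneg A T α
  have hcomb : ∀ c : ℝ, 0 ≤ c → opNormA A (c • (S ∘L T + T ∘L S) + (1 - α) • (S ∘L T))
      ≤ (4 * c + 1) * alphaNorm A T α ^ 2 := fun c hc =>
    opNormA_le (by positivity) fun x => by
      simpa only [aNorm_eq_norm hAB] using
        hTB.norm_apply_combination_le (hTB.alphaBoundedBy_alphaNorm hAB hα0) hα0 hα1 hN hc x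
  have h1 := hcomb (α / 4) (by positivity)
  have h2 := hcomb (α / 2) (by positivity)
  rw [ge_iff_le, max_le_iff]
  constructor <;> nlinarith
end

section
/- For T admitting an A-adjoint and α ∈ [0,1], ‖T‖_{A,α}² ≤ ‖(α/2)(T^{♯A}T + TT^{♯A}) + (1−α)T^{♯A}T‖_A. In particular, w_A(T)² ≤ min over α ∈ [0,1] of ‖(α/2)(T^{♯A}T + TT^{♯A}) + (1−α)T^{♯A}T‖_A ≤ (1/2)‖T^{♯A}T + TT^{♯A}‖_A. -/
/-!
Put `R_α = (α/2)(T♯T + TT♯) + (1-α)T♯T`. For an `A`-unit vector `x` the `A`-adjoint relations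
give `Re ⟨R_α x, x⟩_A = (α/2)(‖Tx‖_A² + ‖T♯x‖_A²) + (1-α)‖Tx‖_A²`, and by Cauchy–Schwarz
`|⟨Tx, x⟩_A| = |⟨x, T♯x⟩_A|` is at most both `‖Tx‖_A` and `‖T♯x‖_A`. Hence
`α |⟨Tx, x⟩_A|² + (1-α)‖Tx‖_A² ≤ Re ⟨R_α x, x⟩_A ≤ ‖R_α x‖_A ≤ ‖R_α‖_A`.

The last step needs care because `‖R_α‖_A` is a supremum over `A`-unit vectors of the closure
of the range of `A`. Every vector differs from one of that closure by an `A`-null vector, and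
`R_α` is `A`-selfadjoint, which keeps `A`-null vectors `A`-null and makes `R_α` `A`-bounded:
`‖R y‖_A^{2^n} ≤ ‖R^{2^n} y‖_A ≤ C ‖R‖^{2^n}` for `‖y‖_A = 1`, so `‖R y‖_A ≤ ‖R‖`.
Taking `α = 1` gives the bound by `(1/2)‖T♯T + TT♯‖_A`.
-/

open scoped ComplexOrder
open ContinuousLinearMap Filter Topology

variable {H : Type*} [NormedAddCommGroup H] [InnerProductSpace ℂ H] [CompleteSpace H]

open scoped InnerProductSpace

lemma le_of_forall_pow_two_pow_le_mul {a b C : ℝ} (hb : 0 ≤ b)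
    (h : ∀ n : ℕ, a ^ 2 ^ n ≤ C * b ^ 2 ^ n) : a ≤ b := by
  by_contra! hba
  have ha : 0 < a := hb.trans_lt hba
  have hlim : Tendsto (fun n : ℕ ↦ C * (b / a) ^ 2 ^ n) atTop (𝓝 0) := by
    simpa using ((tendsto_pow_atTop_nhds_zero_of_lt_one (div_nonneg hb ha.le)
      ((div_lt_one ha).2 hba)).comp (tendsto_pow_atTop_atTop_of_one_lt one_lt_two)).const_mul C
  obtain ⟨n, hn⟩ := (hlim.eventually (gt_mem_nhds one_pos)).exists
  rw [div_pow, mul_div_assoc', div_lt_one (by positivity)] at hn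
  exact (h n).not_gt hn

lemma sq_sSup_le {s : Set ℝ} {M : ℝ} (hM : 0 ≤ M) (hs : ∀ r ∈ s, 0 ≤ r ∧ r ≤ √M) :
    sSup s ^ 2 ≤ M :=
  (Real.le_sqrt (Real.sSup_nonneg fun r hr ↦ (hs r hr).1) hM).1
    (Real.sSup_le (fun r hr ↦ (hs r hr).2) (Real.sqrt_nonneg M))

section ASeminorm

variable {A : H →L[ℂ] H}

omit [CompleteSpace H] in
lemma aNorm_nonneg (x : H) : 0 ≤ aNorm A x := Real.sqrt_nonneg _

omit [CompleteSpace H] in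
lemma aInner_add_left (x y z : H) : aInner A (x + y) z = aInner A x z + aInner A y z := by
  rw [aInner, map_add, inner_add_left]; rfl

omit [CompleteSpace H] in
lemma aInner_real_smul_left (c : ℝ) (x y : H) : aInner A (c • x) y = c * aInner A x y := by
  rw [aInner, map_smul_of_tower, RCLike.real_smul_eq_coe_smul (K := ℂ), inner_smul_real_left]
  rfl

lemma aInner_eq_inner_sqrt (hA : A.IsPositive) (x y : H) :
    aInner A x y = ⟪CFC.sqrt A x, CFC.sqrt A y⟫_ℂ := by
  have hB : IsSelfAdjoint (CFC.sqrt A) := (CFC.sqrt_nonneg A).isSelfAdjoint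
  conv_lhs => rw [aInner, ← CFC.sqrt_mul_sqrt_self A ((nonneg_iff_isPositive A).2 hA)]
  exact hB.isSymmetric _ _

lemma aNorm_eq_norm_sqrt (hA : A.IsPositive) (x : H) : aNorm A x = ‖CFC.sqrt A x‖ := by
  rw [aNorm, aInner_eq_inner_sqrt hA]
  exact (norm_eq_sqrt_re_inner (𝕜 := ℂ) _).symm

lemma aNorm_sq (hA : A.IsPositive) (x : H) : aNorm A x ^ 2 = (aInner A x x).re := by
  rw [aNorm_eq_norm_sqrt hA, aInner_eq_inner_sqrt hA]
  exact norm_sq_eq_re_inner (𝕜 := ℂ) _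

lemma norm_aInner_le (hA : A.IsPositive) (x y : H) :
    ‖aInner A x y‖ ≤ aNorm A x * aNorm A y := by
  rw [aInner_eq_inner_sqrt hA, aNorm_eq_norm_sqrt hA, aNorm_eq_norm_sqrt hA]
  exact norm_inner_le_norm _ _

lemma aInner_conj_symm (hA : A.IsPositive) (x y : H) :
    starRingEnd ℂ (aInner A y x) = aInner A x y := by
  rw [aInner_eq_inner_sqrt hA, aInner_eq_inner_sqrt hA, inner_conj_symm]

lemma aNorm_smul_of_nonneg (hA : A.IsPositive) {c : ℝ} (hc : 0 ≤ c) (x : H) :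
    aNorm A (c • x) = c * aNorm A x := by
  rw [aNorm_eq_norm_sqrt hA, aNorm_eq_norm_sqrt hA, map_smul_of_tower, norm_smul,
    Real.norm_of_nonneg hc]

lemma aNorm_add_of_aNorm_eq_zero (hA : A.IsPositive) (x : H) {z : H} (hz : aNorm A z = 0) :
    aNorm A (x + z) = aNorm A x := by
  rw [aNorm_eq_norm_sqrt hA, norm_eq_zero] at hz
  rw [aNorm_eq_norm_sqrt hA, aNorm_eq_norm_sqrt hA, map_add, hz, add_zero]

lemma aNorm_le (hA : A.IsPositive) (x : H) : aNorm A x ≤ ‖CFC.sqrt A‖ * ‖x‖ := by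
  rw [aNorm_eq_norm_sqrt hA]
  exact (CFC.sqrt A).le_opNorm x

lemma norm_aInner_apply_le (hA : A.IsPositive) (T : H →L[ℂ] H) {x : H} (hx : aNorm A x = 1) :
    ‖aInner A (T x) x‖ ≤ aNorm A (T x) := by
  simpa [hx] using norm_aInner_le hA (T x) x

end ASeminorm

/-- `A`-selfadjointness `A R = R^* A`, phrased with the semi-inner product. -/
def IsASymmetric (A R : H →L[ℂ] H) : Prop :=
  ∀ x y, aInner A (R x) y = aInner A x (R y)

namespace IsASymmetric

variable {A R R' : H →L[ℂ] H}

omit [CompleteSpace H] in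
lemma add (hR : IsASymmetric A R) (hR' : IsASymmetric A R') : IsASymmetric A (R + R') := by
  intro x y
  simp only [aInner, add_apply, map_add, inner_add_left, inner_add_right]
  exact congrArg₂ (· + ·) (hR x y) (hR' x y)

omit [CompleteSpace H] in
lemma smul (hR : IsASymmetric A R) (c : ℝ) : IsASymmetric A (c • R) := by
  intro x y
  simp only [aInner, smul_apply, map_smul_of_tower, RCLike.real_smul_eq_coe_smul (K := ℂ),
    inner_smul_real_left, inner_smul_real_right]
  exact congrArg (c • ·) (hR x y)

omit [CompleteSpace H] in
lemma pow (hR : IsASymmetric A R) (n : ℕ) : IsASymmetric A (R ^ n) := by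
  induction n with
  | zero => intro x y; rfl
  | succ n ih =>
    intro x y
    calc aInner A ((R ^ (n + 1)) x) y = aInner A ((R ^ n) (R x)) y := by rw [pow_succ]; rfl
      _ = aInner A x (R ((R ^ n) y)) := by rw [ih, hR]
      _ = aInner A x ((R ^ (n + 1)) y) := by rw [pow_succ']; rfl

lemma aNorm_apply_sq_le (hA : A.IsPositive) (hR : IsASymmetric A R) (x : H) :
    aNorm A (R x) ^ 2 ≤ aNorm A x * aNorm A (R (R x)) := by
  rw [aNorm_sq hA, hR]
  exact (Complex.re_le_norm _).trans (norm_aInner_le hA _ _)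

lemma aNorm_apply_pow_le (hA : A.IsPositive) (hR : IsASymmetric A R) {x : H}
    (hx : aNorm A x = 1) (n : ℕ) : aNorm A (R x) ^ 2 ^ n ≤ aNorm A ((R ^ 2 ^ n) x) := by
  induction n with
  | zero => simp
  | succ n ih =>
    calc aNorm A (R x) ^ 2 ^ (n + 1) = (aNorm A (R x) ^ 2 ^ n) ^ 2 := by ring
      _ ≤ aNorm A ((R ^ 2 ^ n) x) ^ 2 := by gcongr; exact pow_nonneg (aNorm_nonneg _) _
      _ ≤ aNorm A ((R ^ 2 ^ n) ((R ^ 2 ^ n) x)) := by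
        simpa [hx] using aNorm_apply_sq_le hA (hR.pow (2 ^ n)) x
      _ = aNorm A ((R ^ 2 ^ (n + 1)) x) := by
        rw [pow_succ, pow_mul, sq]; rfl

lemma aNorm_apply_le (hA : A.IsPositive) (hR : IsASymmetric A R) {x : H} (hx : aNorm A x = 1) :
    aNorm A (R x) ≤ ‖R‖ := by
  refine le_of_forall_pow_two_pow_le_mul (norm_nonneg R) (C := ‖CFC.sqrt A‖ * ‖x‖) fun n ↦ ?_
  calc aNorm A (R x) ^ 2 ^ n ≤ aNorm A ((R ^ 2 ^ n) x) := hR.aNorm_apply_pow_le hA hx n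
    _ ≤ ‖CFC.sqrt A‖ * ‖(R ^ 2 ^ n) x‖ := aNorm_le hA _
    _ ≤ ‖CFC.sqrt A‖ * (‖R‖ ^ 2 ^ n * ‖x‖) := by
      gcongr
      exact ((R ^ 2 ^ n).le_opNorm x).trans (by gcongr; exact norm_pow_le' R (by positivity))
    _ = ‖CFC.sqrt A‖ * ‖x‖ * ‖R‖ ^ 2 ^ n := by ring

lemma aNorm_apply_eq_zero (hA : A.IsPositive) (hR : IsASymmetric A R) {x : H}
    (hx : aNorm A x = 0) : aNorm A (R x) = 0 := by
  have h := hR.aNorm_apply_sq_le hA x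
  rw [hx, zero_mul] at h
  exact pow_eq_zero_iff two_ne_zero |>.1 (le_antisymm h (sq_nonneg _))

end IsASymmetric

section OpNormA

variable {A R : H →L[ℂ] H}

omit [CompleteSpace H] in
lemma opNormA_nonneg : 0 ≤ opNormA A R :=
  Real.sSup_nonneg fun _ ⟨_, _, _, hr⟩ ↦ hr ▸ aNorm_nonneg _

lemma opNormA_smul_of_nonneg (hA : A.IsPositive) {c : ℝ} (hc : 0 ≤ c) :
    opNormA A (c • R) = c * opNormA A R := by
  rw [opNormA, opNormA, ← smul_eq_mul, ← Real.sSup_smul_of_nonneg hc]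
  congr 1
  ext r
  simp only [Set.mem_ofPred_eq, Set.mem_smul_set, smul_apply, aNorm_smul_of_nonneg hA hc,
    smul_eq_mul]
  constructor
  · rintro ⟨x, hx, hx1, rfl⟩
    exact ⟨_, ⟨x, hx, hx1, rfl⟩, rfl⟩
  · rintro ⟨_, ⟨x, hx, hx1, rfl⟩, rfl⟩
    exact ⟨x, hx, hx1, rfl⟩

lemma exists_mem_closure_range_aNorm_sub_eq_zero (hA : A.IsPositive) (x : H) :
    ∃ p ∈ closure (Set.range A), aNorm A (x - p) = 0 := by
  set K := (LinearMap.range (A : H →ₗ[ℂ] H)).topologicalClosure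
  refine ⟨K.starProjection x, ?_, ?_⟩
  · have hK : (K : Set H) = closure (Set.range A) := by
      rw [Submodule.topologicalClosure_coe, LinearMap.coe_range]; rfl
    exact hK ▸ K.starProjection_apply_mem x
  · -- `x - p ∈ Kᗮ ≤ (range A)ᗮ = ker A`
    have hker : A (x - K.starProjection x) = 0 := by
      have h := Submodule.orthogonal_le (Submodule.le_topologicalClosure _)
        (K.sub_starProjection_mem_orthogonal x)
      rwa [ContinuousLinearMap.orthogonal_range, hA.isSelfAdjoint.adjoint_eq] at h
    rw [aNorm, aInner, hker, inner_zero_left, Complex.zero_re, Real.sqrt_zero]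

lemma IsASymmetric.aNorm_apply_le_opNormA (hA : A.IsPositive) (hR : IsASymmetric A R) {x : H}
    (hx : aNorm A x = 1) : aNorm A (R x) ≤ opNormA A R := by
  obtain ⟨p, hp, hxp⟩ := exists_mem_closure_range_aNorm_sub_eq_zero hA x
  have hx' : x = p + (x - p) := (add_sub_cancel p x).symm
  rw [hx', map_add, aNorm_add_of_aNorm_eq_zero hA _ (hR.aNorm_apply_eq_zero hA hxp)]
  rw [hx', aNorm_add_of_aNorm_eq_zero hA _ hxp] at hx
  exact le_csSup ⟨‖R‖, fun _ ⟨y, _, hy, hr⟩ ↦ hr ▸ hR.aNorm_apply_le hA hy⟩ ⟨p, hp, hx, rfl⟩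

end OpNormA

noncomputable def mixedProduct (T S : H →L[ℂ] H) (β : ℝ) : H →L[ℂ] H :=
  (β / 2) • (S ∘L T + T ∘L S) + (1 - β) • (S ∘L T)

namespace IsAAdjoint

variable {A T S : H →L[ℂ] H} {β : ℝ}

lemma aInner_apply_left (hT : IsAAdjoint A T S) (x y : H) :
    aInner A (S x) y = aInner A x (T y) := by
  rw [aInner, ← comp_apply, hT.1, comp_apply, adjoint_inner_left]
  rfl

lemma aInner_apply_right (hA : A.IsPositive) (hT : IsAAdjoint A T S) (x y : H) :
    aInner A x (S y) = aInner A (T x) y := by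
  rw [← aInner_conj_symm hA, hT.aInner_apply_left, aInner_conj_symm hA]

lemma isASymmetric_aAdjoint_comp (hA : A.IsPositive) (hT : IsAAdjoint A T S) :
    IsASymmetric A (S ∘L T) := fun x y ↦ by
  rw [comp_apply, comp_apply, hT.aInner_apply_left, hT.aInner_apply_right hA]

lemma isASymmetric_comp_aAdjoint (hA : A.IsPositive) (hT : IsAAdjoint A T S) :
    IsASymmetric A (T ∘L S) := fun x y ↦ by
  rw [comp_apply, comp_apply, ← hT.aInner_apply_right hA, hT.aInner_apply_left]

lemma isASymmetric_mixedProduct (hA : A.IsPositive) (hT : IsAAdjoint A T S) (β : ℝ) :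
    IsASymmetric A (mixedProduct T S β) :=
  (((hT.isASymmetric_aAdjoint_comp hA).add (hT.isASymmetric_comp_aAdjoint hA)).smul _).add
    ((hT.isASymmetric_aAdjoint_comp hA).smul _)

lemma re_aInner_mixedProduct_apply (hA : A.IsPositive) (hT : IsAAdjoint A T S) (β : ℝ) (x : H) :
    (aInner A (mixedProduct T S β x) x).re =
      β / 2 * (aNorm A (T x) ^ 2 + aNorm A (S x) ^ 2) + (1 - β) * aNorm A (T x) ^ 2 := by
  have hST : aInner A (S (T x)) x = aInner A (T x) (T x) := hT.aInner_apply_left (T x) x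
  have hTS : aInner A (T (S x)) x = aInner A (S x) (S x) :=
    (hT.aInner_apply_right hA (S x) x).symm
  simp only [mixedProduct, add_apply, smul_apply, comp_apply, aInner_add_left,
    aInner_real_smul_left, hST, hTS, Complex.add_re, Complex.re_ofReal_mul, aNorm_sq hA]

lemma le_opNormA_mixedProduct (hA : A.IsPositive) (hT : IsAAdjoint A T S)
    (hβ : β ∈ Set.Icc (0 : ℝ) 1) {x : H} (hx : aNorm A x = 1) :
    β * ‖aInner A (T x) x‖ ^ 2 + (1 - β) * aNorm A (T x) ^ 2 ≤
      opNormA A (mixedProduct T S β) := by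
  set c := ‖aInner A (T x) x‖
  have hcT : c ≤ aNorm A (T x) := norm_aInner_apply_le hA T hx
  have hcS : c ≤ aNorm A (S x) := by
    simpa [c, hx, hT.aInner_apply_right hA] using norm_aInner_le hA x (S x)
  have hc : c ^ 2 ≤ (aNorm A (T x) ^ 2 + aNorm A (S x) ^ 2) / 2 := by
    nlinarith [norm_nonneg (aInner A (T x) x), sq_nonneg (aNorm A (T x) - aNorm A (S x))]
  calc β * c ^ 2 + (1 - β) * aNorm A (T x) ^ 2
      ≤ β / 2 * (aNorm A (T x) ^ 2 + aNorm A (S x) ^ 2) + (1 - β) * aNorm A (T x) ^ 2 := by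
        nlinarith [mul_le_mul_of_nonneg_left hc hβ.1]
    _ = (aInner A (mixedProduct T S β x) x).re := (hT.re_aInner_mixedProduct_apply hA β x).symm
    _ ≤ ‖aInner A (mixedProduct T S β x) x‖ := Complex.re_le_norm _
    _ ≤ aNorm A (mixedProduct T S β x) := norm_aInner_apply_le hA _ hx
    _ ≤ opNormA A (mixedProduct T S β) :=
        (hT.isASymmetric_mixedProduct hA β).aNorm_apply_le_opNormA hA hx

lemma alphaNorm_sq_le (hA : A.IsPositive) (hT : IsAAdjoint A T S) (hβ : β ∈ Set.Icc (0 : ℝ) 1) :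
    alphaNorm A T β ^ 2 ≤ opNormA A (mixedProduct T S β) :=
  sq_sSup_le opNormA_nonneg fun _ ⟨_, hx, hr⟩ ↦
    hr ▸ ⟨Real.sqrt_nonneg _, Real.sqrt_le_sqrt (hT.le_opNormA_mixedProduct hA hβ hx)⟩

lemma wA_sq_le (hA : A.IsPositive) (hT : IsAAdjoint A T S) (hβ : β ∈ Set.Icc (0 : ℝ) 1) :
    wA A T ^ 2 ≤ opNormA A (mixedProduct T S β) := by
  refine sq_sSup_le opNormA_nonneg fun _ ⟨x, hx, hr⟩ ↦ hr ▸ ⟨norm_nonneg _, ?_⟩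
  rw [Real.le_sqrt (norm_nonneg _) opNormA_nonneg]
  refine le_trans ?_ (hT.le_opNormA_mixedProduct hA hβ hx)
  have hc := norm_aInner_apply_le hA T hx
  nlinarith [hβ.2, mul_self_le_mul_self (norm_nonneg _) hc]

end IsAAdjoint

theorem stmt17 (A T S : H →L[ℂ] H) (hA : A.IsPositive) (hT : IsAAdjoint A T S)
    (α : ℝ) (hα : α ∈ Set.Icc (0:ℝ) 1) :
    alphaNorm A T α ^ 2 ≤
      opNormA A ((α/2) • (S ∘L T + T ∘L S) + (1 - α) • (S ∘L T)) ∧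
    wA A T ^ 2 ≤
      sInf {r | ∃ β ∈ Set.Icc (0:ℝ) 1,
        r = opNormA A ((β/2) • (S ∘L T + T ∘L S) + (1 - β) • (S ∘L T))} ∧
    sInf {r | ∃ β ∈ Set.Icc (0:ℝ) 1,
        r = opNormA A ((β/2) • (S ∘L T + T ∘L S) + (1 - β) • (S ∘L T))} ≤
      (1/2) * opNormA A (S ∘L T + T ∘L S) := by
  refine ⟨hT.alphaNorm_sq_le hA hα, le_csInf ⟨_, 0, ⟨le_rfl, zero_le_one⟩, rfl⟩ ?_, ?_⟩
  · rintro _ ⟨β, hβ, rfl⟩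
    exact hT.wA_sq_le hA hβ
  · calc _ ≤ opNormA A (mixedProduct T S 1) := by
          refine csInf_le ⟨0, ?_⟩ ⟨1, ⟨zero_le_one, le_rfl⟩, rfl⟩
          rintro _ ⟨β, -, rfl⟩
          exact opNormA_nonneg
      _ = 1 / 2 * opNormA A (S ∘L T + T ∘L S) := by
          rw [mixedProduct, sub_self, zero_smul, add_zero, opNormA_smul_of_nonneg hA (by norm_num)]
end
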